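/- If d ≥ 3, then all Gram coefficients b_{ij} are nonzero and the rescaled operators G^(1)_{[ij][kl]} := b_{ij}^{−1} Ĝ^(1)_{[ij][kl]} satisfy the pure matrix-unit multiplication rule: for all a,b,i,j,k,l,p,q ∈ {S,A}, G^(1)_{[ab][ij]} G^(1)_{[kl][pq]} = δ_{ik} δ_{jl} G^(1)_{[ab][pq]}. -/

import Mathlib

open Matrix Kronecker

namespace WBA

/-- Configurations of `p` qudits of local dimension `d`. -/
abbrev Conf (d p : ℕ) := Fin p → Fin d

/-- Operators on `H = (ℂ^d)^{⊗ 2p}`, indexed by pairs (unprimed configuration, primed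
configuration). -/
abbrev Op (d p : ℕ) := Matrix (Conf d p × Conf d p) (Conf d p × Conf d p) ℂ

/-- The projector `P⁺_{a,c'}` onto the maximally entangled state between unprimed system `a`
and primed system `c`, tensored with the identity elsewhere. -/
noncomputable def Pplus (d p : ℕ) (a c : Fin p) : Op d p :=
  Matrix.of fun xy uv =>
    if xy.1 a = xy.2 c ∧ uv.1 a = uv.2 c ∧ (∀ j, j ≠ a → xy.1 j = uv.1 j) ∧
        (∀ j, j ≠ c → xy.2 j = uv.2 j) then
      (d : ℂ)⁻¹
    else 0

/-- `d • P⁺_{a,c'}`, i.e. the partially transposed swap `V^{t_{c'}}_{(a,c')}`. -/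
noncomputable def arc (d p : ℕ) (a c : Fin p) : Op d p := (d : ℂ) • Pplus d p a c

/-- `V^(k) = ∏_{j=p-k+1}^{p} (d • P⁺_{j,j'})` (product over the last `k` systems;
`V^(0) = 1`). -/
noncomputable def Vop (d p k : ℕ) : Op d p :=
  (((List.range p).filter (fun j => decide (p - k ≤ j))).map
    (fun j => if h : j < p then arc d p ⟨j, h⟩ ⟨j, h⟩ else 1)).prod

/-- `Q^(p) = d^{-p} V^(p)` and `Q^(k) = d^{-k} V^(k) - d^{-(k+1)} V^(k+1)` for `k < p`. -/
noncomputable def Qop (d p k : ℕ) : Op d p :=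
  if k = p then ((d : ℂ) ^ p)⁻¹ • Vop d p p
  else ((d : ℂ) ^ k)⁻¹ • Vop d p k - ((d : ℂ) ^ (k + 1))⁻¹ • Vop d p (k + 1)

/-- Permutation matrix on `(ℂ^d)^{⊗ n}`: sends `e_v` to `e_{v ∘ σ⁻¹}`. -/
noncomputable def permMat (d n : ℕ) (σ : Equiv.Perm (Fin n)) :
    Matrix (Fin n → Fin d) (Fin n → Fin d) ℂ :=
  Matrix.of fun x u => if x = u ∘ ⇑σ⁻¹ then 1 else 0

/-- `V_σ`: permutation of the unprimed factors, identity on the primed factors. -/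
noncomputable def VL (d p : ℕ) (σ : Equiv.Perm (Fin p)) : Op d p :=
  (permMat d p σ) ⊗ₖ (1 : Matrix (Conf d p) (Conf d p) ℂ)

/-- `V'_τ`: permutation of the primed factors, identity on the unprimed factors. -/
noncomputable def VR (d p : ℕ) (τ : Equiv.Perm (Fin p)) : Op d p :=
  (1 : Matrix (Conf d p) (Conf d p) ℂ) ⊗ₖ (permMat d p τ)

/-- Identification of `H` with `(ℂ^d)^{⊗ (p+p)}`. -/
def glue (d p : ℕ) : (Conf d p × Conf d p) ≃ (Fin (p + p) → Fin d) :=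
  (Equiv.sumArrowEquivProdArrow (Fin p) (Fin p) (Fin d)).symm.trans
    (Equiv.arrowCongr finSumFinEquiv (Equiv.refl (Fin d)))

/-- The permutation operator `W_π`, `π ∈ S_{2p}`, permuting all `2p` tensor factors of `H`. -/
noncomputable def Wfull (d p : ℕ) (π : Equiv.Perm (Fin (p + p))) : Op d p :=
  (permMat d (p + p) π).submatrix (glue d p) (glue d p)

/-- Partial transpose over the `p` primed factors:
`⟨x,y|M^Γ|u,v⟩ = ⟨x,v|M|u,y⟩`. -/
noncomputable def ptrans (d p : ℕ) (M : Op d p) : Op d p :=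
  Matrix.of fun xy uv => M (xy.1, uv.2) (uv.1, xy.2)

/-- The algebra `A^d_{p,p}` of partially transposed permutation operators, as a
linear subspace of `End(H)`. -/
noncomputable def Apt (d p : ℕ) : Submodule ℂ (Op d p) :=
  Submodule.span ℂ {M | ∃ π : Equiv.Perm (Fin (p + p)), M = ptrans d p (Wfull d p π)}

/-- Extension of an operator on systems `1,…,p-r,1',…,(p-r)'` by the identity on the
remaining systems. -/
noncomputable def embed (d p r : ℕ) (M : Op d (p - r)) : Op d p :=
  Matrix.of fun xy uv =>
    M (xy.1 ∘ Fin.castLE (Nat.sub_le p r), xy.2 ∘ Fin.castLE (Nat.sub_le p r))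
      (uv.1 ∘ Fin.castLE (Nat.sub_le p r), uv.2 ∘ Fin.castLE (Nat.sub_le p r)) *
    (if ∀ j : Fin p, p - r ≤ (j : ℕ) → xy.1 j = uv.1 j ∧ xy.2 j = uv.2 j then 1 else 0)

/-- The ideal `M̃^(k) = span{ V_σ V'_τ Q^(k) V_π V'_ρ }` of `A^d_{p,p}`. -/
noncomputable def Mtil (d p k : ℕ) : Submodule ℂ (Op d p) :=
  Submodule.span ℂ {M | ∃ σ τ π ρ : Equiv.Perm (Fin p),
    M = VL d p σ * VR d p τ * Qop d p k * (VL d p π * VR d p ρ)}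

/-- Labels for the two irreps of `S_2`: symmetric `S` and antisymmetric `A`. -/
inductive SA
  | S
  | A
deriving DecidableEq

instance : Fintype SA := ⟨{SA.S, SA.A}, fun x => by cases x <;> simp⟩

/-- The swap operator on `ℂ^d ⊗ ℂ^d`. -/
noncomputable def Fsw (d : ℕ) : Matrix (Conf d 2) (Conf d 2) ℂ :=
  Matrix.of fun x u => if x 0 = u 1 ∧ x 1 = u 0 then 1 else 0

/-- Symmetric and antisymmetric projectors on `ℂ^d ⊗ ℂ^d`. -/
noncomputable def Esm (d : ℕ) : SA → Matrix (Conf d 2) (Conf d 2) ℂ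
  | SA.S => (2 : ℂ)⁻¹ • (1 + Fsw d)
  | SA.A => (2 : ℂ)⁻¹ • (1 - Fsw d)

/-- `E_i ⊗ E_j` on `H = (ℂ^d)^{⊗4}`. -/
noncomputable def EE (d : ℕ) (i j : SA) : Op d 2 := (Esm d i) ⊗ₖ (Esm d j)

/-- `E_i ⊗ 1` on `H = (ℂ^d)^{⊗4}`. -/
noncomputable def EId (d : ℕ) (i : SA) : Op d 2 :=
  (Esm d i) ⊗ₖ (1 : Matrix (Conf d 2) (Conf d 2) ℂ)

/-- Multiplicities `m_S = d(d+1)/2`, `m_A = d(d-1)/2` (real valued). -/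
noncomputable def mR (d : ℕ) : SA → ℝ
  | SA.S => (d : ℝ) * ((d : ℝ) + 1) / 2
  | SA.A => (d : ℝ) * ((d : ℝ) - 1) / 2

/-- Multiplicities `m_S = d(d+1)/2`, `m_A = d(d-1)/2` (complex valued). -/
noncomputable def mC (d : ℕ) : SA → ℂ
  | SA.S => (d : ℂ) * ((d : ℂ) + 1) / 2
  | SA.A => (d : ℂ) * ((d : ℂ) - 1) / 2

/-- `V^(1) = d • P⁺_{2,2'}` for `p = 2`. -/
noncomputable def V1 (d : ℕ) : Op d 2 := arc d 2 1 1

/-- `V^(2) = d² • P⁺_{2,2'} P⁺_{1,1'}` for `p = 2`. -/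
noncomputable def V2 (d : ℕ) : Op d 2 := arc d 2 1 1 * arc d 2 0 0

/-- `Q^(2) = d^{-2} V^(2)` for `p = 2`. -/
noncomputable def Q2 (d : ℕ) : Op d 2 := ((d : ℂ) ^ 2)⁻¹ • V2 d

/-- `Q^(1) = d^{-1} V^(1) - d^{-2} V^(2)` for `p = 2`. -/
noncomputable def Q1 (d : ℕ) : Op d 2 :=
  (d : ℂ)⁻¹ • V1 d - ((d : ℂ) ^ 2)⁻¹ • V2 d

/-- `G^(2)_{kl} = (d²/√(m_k m_l)) (E_k ⊗ 1) Q^(2) (E_l ⊗ 1)`. -/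
noncomputable def G2 (d : ℕ) (k l : SA) : Op d 2 :=
  ((d : ℂ) ^ 2 / ((Real.sqrt (mR d k * mR d l) : ℝ) : ℂ)) • (EId d k * Q2 d * EId d l)

/-- `G^(2) = G^(2)_{SS} + G^(2)_{AA}`. -/
noncomputable def G2sum (d : ℕ) : Op d 2 := G2 d SA.S SA.S + G2 d SA.A SA.A

/-- The Gram coefficients `b_{SS} = (d+2)/(4d)`, `b_{SA} = b_{AS} = 1/4`,
`b_{AA} = (d-2)/(4d)`. -/
noncomputable def bc (d : ℕ) : SA → SA → ℂ
  | SA.S, SA.S => ((d : ℂ) + 2) / (4 * (d : ℂ))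
  | SA.S, SA.A => 1 / 4
  | SA.A, SA.S => 1 / 4
  | SA.A, SA.A => ((d : ℂ) - 2) / (4 * (d : ℂ))

/-- `Ĝ^(1)_{[ij][kl]} = (E_i ⊗ E_j) Q^(1) (E_k ⊗ E_l)`. -/
noncomputable def Ghat1 (d : ℕ) (i j k l : SA) : Op d 2 :=
  EE d i j * Q1 d * EE d k l

/-- `G^(1)_{[ij][kl]} = b_{ij}⁻¹ Ĝ^(1)_{[ij][kl]}`. -/
noncomputable def G1 (d : ℕ) (i j k l : SA) : Op d 2 := (bc d i j)⁻¹ • Ghat1 d i j k l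

/-- `G^(1) = Σ_{ij} G^(1)_{[ij][ij]}`. -/
noncomputable def G1sum (d : ℕ) : Op d 2 := ∑ i : SA, ∑ j : SA, G1 d i j i j

/-- `G^(0)_{ij} = E_i⊗E_j - b_{ij}⁻¹ (E_i⊗E_j)Q^(1)(E_i⊗E_j)
- δ_{ij} (d²/m_i) (E_i⊗1)Q^(2)(E_i⊗1)`. -/
noncomputable def G0 (d : ℕ) (i j : SA) : Op d 2 :=
  EE d i j - (bc d i j)⁻¹ • (EE d i j * Q1 d * EE d i j) -
    (if i = j then (d : ℂ) ^ 2 / mC d i else 0) • (EId d i * Q2 d * EId d i)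

/-! With `P = P⁺_{2,2'}` and `P' = P⁺_{1,1'}` one has `Q^(1) = P (1 - P')` for commuting
projectors `P`, `P'`. Writing `E_i ⊗ E_j = ¼ (1 + ε_i F₁₂ + ε_j F₁'₂' + ε_i ε_j F₁₂ F₁'₂')` and
using `P F₁₂ P = P F₁'₂' P = d⁻¹ P` and `P F₁₂ F₁'₂' P = P' P`, one gets
`P (E_i ⊗ E_j) P = b_{ij} P + ¼ ε_i ε_j P' P`. The `P' P` term is killed by the factors `1 - P'`,
so `Q^(1) (E_i ⊗ E_j) Q^(1) = b_{ij} Q^(1)`. Since the `E_i ⊗ E_j` are orthogonal idempotents,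
the sandwiches `b_{ij}⁻¹ (E_i ⊗ E_j) Q^(1) (E_k ⊗ E_l)` then multiply as matrix units. -/

section Algebra

variable {𝕜 R : Type*} [Field 𝕜] [Ring R] [Algebra 𝕜 R]

theorem sub_mul_mul_sub_eq_smul {P P' M : R} {b c : 𝕜} (hP' : IsIdempotentElem P')
    (hPP' : Commute P P') (hM : P * M * P = b • P + c • (P' * P)) :
    (P - P * P') * M * (P - P * P') = b • (P - P * P') := by
  have hleft : P - P * P' = (1 - P') * P := by rw [sub_mul, one_mul, hPP'.eq]
  have hright : P - P * P' = P * (1 - P') := by rw [mul_sub, mul_one]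
  calc (P - P * P') * M * (P - P * P')
      = (1 - P') * (P * M * P) * (1 - P') := by
        nth_rewrite 1 [hleft]; rw [hright]; simp only [mul_assoc]
    _ = b • ((1 - P') * P * (1 - P')) + c • ((1 - P') * P' * P * (1 - P')) := by
        rw [hM]; simp only [mul_add, add_mul, mul_smul_comm, smul_mul_assoc, mul_assoc]
    _ = b • (P - P * P') := by
        rw [hP'.one_sub_mul_self, zero_mul, zero_mul, smul_zero, add_zero, ← hleft, hright,
          mul_assoc, hP'.one_sub.eq]

theorem smul_sandwich_mul_smul_sandwich {ι : Type*} [DecidableEq ι] {E : ι → R} {Q : R}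
    {b : ι → 𝕜} (hE : ∀ i j, E i * E j = if i = j then E i else 0)
    (hQ : ∀ i, Q * E i * Q = b i • Q) (hb : ∀ i, b i ≠ 0) (i j k l : ι) :
    ((b i)⁻¹ • (E i * Q * E j)) * ((b k)⁻¹ • (E k * Q * E l)) =
      if j = k then (b i)⁻¹ • (E i * Q * E l) else 0 := by
  have hmid : E i * Q * E j * (E k * Q * E l) = E i * (Q * (E j * E k) * Q) * E l := by
    simp only [mul_assoc]
  rw [smul_mul_smul_comm, hmid, hE]
  split_ifs with hjk
  · subst hjk
    rw [hQ, mul_smul_comm, smul_mul_assoc, smul_smul, mul_assoc, inv_mul_cancel₀ (hb j), mul_one,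
      mul_assoc]
  · simp

end Algebra

theorem sum_fun_fin_two {α M : Type*} [Fintype α] [AddCommMonoid M] (f : (Fin 2 → α) → M) :
    ∑ w, f w = ∑ a, ∑ b, f ![a, b] := by
  rw [← (piFinTwoEquiv fun _ => α).symm.sum_comp, Fintype.sum_prod_type]
  rfl

theorem sum_prod_fun_fin_two {α M : Type*} [Fintype α] [AddCommMonoid M]
    (f : (Fin 2 → α) × (Fin 2 → α) → M) :
    ∑ w, f w = ∑ a, ∑ b, ∑ c, ∑ e, f (![a, b], ![c, e]) := by
  simp only [Fintype.sum_prod_type, sum_fun_fin_two]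

def SA.sign : SA → ℂ
  | SA.S => 1
  | SA.A => -1

section Swap

variable {d : ℕ}

-- `simp -dsimp` rewrites `![a, b] 0` to `a` propositionally, which keeps the `Decidable` instances
-- of the `ite`s in step with their conditions, so that `Finset.sum_ite_eq` can collapse the sums.
theorem Fsw_mul_self : Fsw d * Fsw d = 1 := by
  ext x u
  simp -dsimp [mul_apply, sum_fun_fin_two, Fsw, one_apply, ite_and, Finset.sum_ite_eq',
    mul_ite, funext_iff, Fin.forall_fin_two]
  split_ifs <;> simp_all

theorem Esm_eq (i : SA) : Esm d i = (2 : ℂ)⁻¹ • (1 + i.sign • Fsw d) := by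
  cases i <;> simp [Esm, SA.sign, sub_eq_add_neg]

theorem Esm_mul_Esm (i k : SA) : Esm d i * Esm d k = if i = k then Esm d i else 0 := by
  have hF : Fsw d * Fsw d = 1 := Fsw_mul_self
  cases i <;> cases k <;>
    simp only [Esm, reduceCtorEq, if_true, if_false, smul_mul_smul_comm, mul_add, add_mul,
      mul_sub, sub_mul, one_mul, mul_one, hF] <;> module

theorem EE_mul_EE (i j k l : SA) :
    EE d i j * EE d k l = if (i, j) = (k, l) then EE d i j else 0 := by
  rw [EE, EE, ← mul_kronecker_mul, Esm_mul_Esm, Esm_mul_Esm]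
  by_cases hik : i = k <;> by_cases hjl : j = l <;> simp [hik, hjl]

theorem EE_eq (i j : SA) :
    EE d i j = (4 : ℂ)⁻¹ • (1 + i.sign • (Fsw d ⊗ₖ 1) + j.sign • (1 ⊗ₖ Fsw d) +
      (i.sign * j.sign) • (Fsw d ⊗ₖ Fsw d)) := by
  rw [EE, Esm_eq, Esm_eq]
  simp only [add_kronecker, kronecker_add, smul_kronecker, kronecker_smul, one_kronecker_one]
  module

end Swap

section MaximallyEntangled

variable {d : ℕ}

theorem Pplus_two_one_apply (x y u v : Conf d 2) :
    Pplus d 2 1 1 (x, y) (u, v) =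
      if x 1 = y 1 ∧ u 1 = v 1 ∧ x 0 = u 0 ∧ y 0 = v 0 then (d : ℂ)⁻¹ else 0 := by
  simp [Pplus, Fin.forall_fin_two]

theorem Pplus_two_zero_apply (x y u v : Conf d 2) :
    Pplus d 2 0 0 (x, y) (u, v) =
      if x 0 = y 0 ∧ u 0 = v 0 ∧ x 1 = u 1 ∧ y 1 = v 1 then (d : ℂ)⁻¹ else 0 := by
  simp [Pplus, Fin.forall_fin_two]

theorem isIdempotentElem_Pplus_two [NeZero d] (a : Fin 2) :
    IsIdempotentElem (Pplus d 2 a a) := by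
  have hd : (d : ℂ) ≠ 0 := NeZero.ne _
  fin_cases a <;> ext ⟨x, y⟩ ⟨u, v⟩ <;>
    simp -dsimp [mul_apply, sum_prod_fun_fin_two, Pplus_two_zero_apply, Pplus_two_one_apply,
      ite_and, Finset.sum_ite_eq, Finset.sum_ite_eq', mul_ite, ite_mul, Finset.sum_const,
      Finset.card_univ] <;>
    split_ifs <;> simp_all

theorem commute_Pplus_two : Commute (Pplus d 2 1 1) (Pplus d 2 0 0) := by
  ext ⟨x, y⟩ ⟨u, v⟩
  simp -dsimp [mul_apply, sum_prod_fun_fin_two, Pplus_two_zero_apply, Pplus_two_one_apply,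
    ite_and, Finset.sum_ite_eq, Finset.sum_ite_eq', mul_ite, ite_mul]
  split_ifs <;> simp_all

theorem Pplus_mul_swap_kron_one_mul_Pplus :
    Pplus d 2 1 1 * (Fsw d ⊗ₖ 1) * Pplus d 2 1 1 = (d : ℂ)⁻¹ • Pplus d 2 1 1 := by
  ext ⟨x, y⟩ ⟨u, v⟩
  simp -dsimp [mul_apply, sum_prod_fun_fin_two, Pplus_two_one_apply, Fsw, kroneckerMap_apply,
    one_apply, Matrix.smul_apply, ite_and, Finset.sum_ite_eq, Finset.sum_ite_eq', mul_ite, ite_mul,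
    funext_iff, Fin.forall_fin_two]

theorem Pplus_mul_one_kron_swap_mul_Pplus :
    Pplus d 2 1 1 * (1 ⊗ₖ Fsw d) * Pplus d 2 1 1 = (d : ℂ)⁻¹ • Pplus d 2 1 1 := by
  ext ⟨x, y⟩ ⟨u, v⟩
  simp -dsimp [mul_apply, sum_prod_fun_fin_two, Pplus_two_one_apply, Fsw, kroneckerMap_apply,
    one_apply, Matrix.smul_apply, ite_and, Finset.sum_ite_eq, Finset.sum_ite_eq', mul_ite, ite_mul,
    funext_iff, Fin.forall_fin_two]

theorem Pplus_mul_swap_kron_swap_mul_Pplus :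
    Pplus d 2 1 1 * (Fsw d ⊗ₖ Fsw d) * Pplus d 2 1 1 = Pplus d 2 0 0 * Pplus d 2 1 1 := by
  ext ⟨x, y⟩ ⟨u, v⟩
  simp -dsimp [mul_apply, sum_prod_fun_fin_two, Pplus_two_zero_apply, Pplus_two_one_apply, Fsw,
    kroneckerMap_apply, ite_and, Finset.sum_ite_eq, Finset.sum_ite_eq', mul_ite, ite_mul]
  split_ifs <;> simp_all

end MaximallyEntangled

section Gram

variable {d : ℕ}

theorem bc_eq [NeZero d] (i j : SA) :
    bc d i j = (4 : ℂ)⁻¹ * (1 + i.sign * (d : ℂ)⁻¹ + j.sign * (d : ℂ)⁻¹) := by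
  have hd : (d : ℂ) ≠ 0 := NeZero.ne _
  cases i <;> cases j <;> simp only [bc, SA.sign] <;> field_simp <;> ring

theorem bc_ne_zero [NeZero d] (h2 : d ≠ 2) (i j : SA) : bc d i j ≠ 0 := by
  have hd : (d : ℂ) ≠ 0 := NeZero.ne _
  have hd2 : (d : ℂ) - 2 ≠ 0 := sub_ne_zero.mpr (by exact_mod_cast h2)
  have hd2' : (d : ℂ) + 2 ≠ 0 := by exact_mod_cast (by omega : d + 2 ≠ 0)
  cases i <;> cases j <;> simp [bc, hd, hd2, hd2']

theorem Pplus_mul_EE_mul_Pplus [NeZero d] (i j : SA) :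
    Pplus d 2 1 1 * EE d i j * Pplus d 2 1 1 =
      bc d i j • Pplus d 2 1 1 +
        ((4 : ℂ)⁻¹ * (i.sign * j.sign)) • (Pplus d 2 0 0 * Pplus d 2 1 1) := by
  simp only [EE_eq, mul_smul_comm, smul_mul_assoc, mul_add, add_mul, mul_one,
    (isIdempotentElem_Pplus_two 1).eq, Pplus_mul_swap_kron_one_mul_Pplus,
    Pplus_mul_one_kron_swap_mul_Pplus, Pplus_mul_swap_kron_swap_mul_Pplus, bc_eq]
  module

theorem Q1_eq [NeZero d] : Q1 d = Pplus d 2 1 1 - Pplus d 2 1 1 * Pplus d 2 0 0 := by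
  have hd : (d : ℂ) ≠ 0 := NeZero.ne _
  rw [Q1, V1, V2, arc, arc, smul_mul_smul_comm, smul_smul, smul_smul, ← sq, inv_mul_cancel₀ hd,
    inv_mul_cancel₀ (pow_ne_zero 2 hd), one_smul, one_smul]

theorem Q1_mul_EE_mul_Q1 [NeZero d] (i j : SA) : Q1 d * EE d i j * Q1 d = bc d i j • Q1 d := by
  rw [Q1_eq]
  exact sub_mul_mul_sub_eq_smul (isIdempotentElem_Pplus_two 0) commute_Pplus_two
    (Pplus_mul_EE_mul_Pplus i j)

end Gram

/-- for `d ≥ 3` all Gram coefficients `b_{ij}` are nonzero, and the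
rescaled operators `G^(1)_{[ij][kl]} = b_{ij}⁻¹ Ĝ^(1)_{[ij][kl]}` satisfy the pure
matrix-unit rule `G^(1)_{[ab][ij]} G^(1)_{[kl][pq]} = δ_{ik} δ_{jl} G^(1)_{[ab][pq]}`. -/
theorem G1_matrix_units (d : ℕ) (hd : 3 ≤ d) :
    (∀ i j : SA, bc d i j ≠ 0) ∧
    (∀ a b i j k l u v : SA,
      G1 d a b i j * G1 d k l u v = if i = k ∧ j = l then G1 d a b u v else 0) := by
  have : NeZero d := ⟨by omega⟩
  have hb : ∀ i j : SA, bc d i j ≠ 0 := bc_ne_zero (by omega)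
  refine ⟨hb, fun a b i j k l u v => ?_⟩
  have h := smul_sandwich_mul_smul_sandwich (E := fun p : SA × SA => EE d p.1 p.2) (Q := Q1 d)
    (fun p q => EE_mul_EE p.1 p.2 q.1 q.2) (fun p => Q1_mul_EE_mul_Q1 p.1 p.2)
    (fun p => hb p.1 p.2) (a, b) (i, j) (k, l) (u, v)
  simpa only [G1, Ghat1, Prod.mk.injEq] using h

end WBA
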